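/- If θ and τ lie in two different open arcs among (-π,-π/3), (-π/3,π/3), (π/3,π), then for any b, c > 0 the kernels of ϱ_{b,θ} and ϱ_{c,τ} intersect trivially, and hence any nontrivial convex combination λϱ_{b,θ} + (1-λ)ϱ_{c,τ} (0 < λ < 1) has full rank 9. -/

import Mathlib

open Matrix Complex

noncomputable def pTheta (θ : ℝ) : ℝ :=
  max (max (2 * Real.cos (θ - 2 * Real.pi / 3)) (2 * Real.cos θ))
    (2 * Real.cos (θ + 2 * Real.pi / 3))

noncomputable def rho (b θ : ℝ) : Matrix (Fin 9) (Fin 9) ℂ :=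
  let p : ℂ := (pTheta θ : ℂ)
  let e : ℂ := Complex.exp (θ * Complex.I)
  let f : ℂ := Complex.exp (-θ * Complex.I)
  !![p, 0, 0, 0, -e, 0, 0, 0, -f;
     0, 1/(b:ℂ), 0, -f, 0, 0, 0, 0, 0;
     0, 0, (b:ℂ), 0, 0, 0, -e, 0, 0;
     0, -e, 0, (b:ℂ), 0, 0, 0, 0, 0;
     -f, 0, 0, 0, p, 0, 0, 0, -e;
     0, 0, 0, 0, 0, 1/(b:ℂ), 0, -f, 0;
     0, 0, -f, 0, 0, 0, 1/(b:ℂ), 0, 0;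
     0, 0, 0, 0, 0, -e, 0, (b:ℂ), 0;
     -e, 0, 0, 0, -f, 0, 0, 0, p]

noncomputable def arcs : Fin 3 → Set ℝ :=
  ![Set.Ioo (-Real.pi) (-(Real.pi / 3)), Set.Ioo (-(Real.pi / 3)) (Real.pi / 3),
    Set.Ioo (Real.pi / 3) Real.pi]

/-!
Up to a permutation of coordinates, `rho b θ` is the direct sum of the circulant block on the
coordinates `0, 4, 8` and three `2 × 2` blocks on `{1, 3}, {2, 6}, {5, 7}`, and a convex
combination `l • rho b θ + (1 - l) • rho c τ` has the same shape. Its circulant block has, for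
the cube roots of unity `e^{is}`, the real eigenvalues
`l (pTheta θ - 2 cos (θ + s)) + (1 - l) (pTheta τ - 2 cos (τ + s))`.
Both brackets are nonnegative since `pTheta` is the largest of the three cosines, and the bracket
of `θ` vanishes only for the one shift with `θ + s ∈ (-π/3, π/3)`, which identifies the arc of
`θ`; for `θ, τ` on different arcs no eigenvalue vanishes. The `2 × 2` blocks have determinant
`l (1 - l) (b/c + c/b - 2 cos (θ - τ)) > 0` since `θ ≠ τ`. So every such combination is
invertible, and a common kernel vector of `rho b θ` and `rho c τ` lies in the kernel of the
combination with `l = 1/2`.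
-/

section Blocks

variable {R : Type*} [CommRing R] [IsDomain R]

theorem eq_zero_of_two_by_two_det_ne_zero {A B C D x y : R} (hdet : A * D - B * C ≠ 0)
    (h₁ : A * x + B * y = 0) (h₂ : C * x + D * y = 0) : x = 0 ∧ y = 0 := by
  have hx : (A * D - B * C) * x = 0 := by linear_combination D * h₁ - B * h₂
  have hy : (A * D - B * C) * y = 0 := by linear_combination A * h₂ - C * h₁
  exact ⟨(mul_eq_zero.mp hx).resolve_left hdet, (mul_eq_zero.mp hy).resolve_left hdet⟩

omit [IsDomain R] in
theorem circulant_eigenvalue_mul_eq_zero {P E F a b c ζ : R} (hζ : ζ ^ 3 = 1)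
    (h₀ : P * a - E * b - F * c = 0) (h₁ : -F * a + P * b - E * c = 0)
    (h₂ : -E * a - F * b + P * c = 0) :
    (P - E * ζ - F * ζ ^ 2) * (a + ζ ^ 2 * b + ζ * c) = 0 := by
  linear_combination h₀ + ζ ^ 2 * h₁ + ζ * h₂ - ((E + F * ζ) * b + F * c) * hζ

theorem eq_zero_of_circulant_eigenvalue_ne_zero {ω P E F a b c : R} (hω : IsPrimitiveRoot ω 3)
    (hP : ∀ ζ : R, ζ ^ 3 = 1 → P - E * ζ - F * ζ ^ 2 ≠ 0)
    (h₀ : P * a - E * b - F * c = 0) (h₁ : -F * a + P * b - E * c = 0)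
    (h₂ : -E * a - F * b + P * c = 0) : a = 0 ∧ b = 0 ∧ c = 0 := by
  have hs : ∀ ζ : R, ζ ^ 3 = 1 → a + ζ ^ 2 * b + ζ * c = 0 := fun ζ hζ =>
    (mul_eq_zero.mp (circulant_eigenvalue_mul_eq_zero hζ h₀ h₁ h₂)).resolve_left (hP ζ hζ)
  have hω3 : ω ^ 3 = 1 := hω.pow_eq_one
  have hq : 1 + ω + ω ^ 2 = 0 := by
    have h : (ω - 1) * (1 + ω + ω ^ 2) = 0 := by linear_combination hω3
    exact (mul_eq_zero.mp h).resolve_left (sub_ne_zero.mpr (hω.ne_one (by norm_num)))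
  have s₀ := hs 1 (one_pow 3)
  have s₁ := hs ω hω3
  have s₂ := hs (ω ^ 2) (by rw [← pow_mul, pow_mul', hω3, one_pow])
  have h3 : (3 : R) ≠ 0 := by exact_mod_cast hω.neZero'.out
  -- inverse discrete Fourier transform
  refine ⟨(mul_eq_zero.mp (?_ : 3 * a = 0)).resolve_left h3,
    (mul_eq_zero.mp (?_ : 3 * b = 0)).resolve_left h3,
    (mul_eq_zero.mp (?_ : 3 * c = 0)).resolve_left h3⟩
  · linear_combination s₀ + s₁ + s₂ - (b + c) * hq - b * ω * hω3
  · linear_combination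
      s₀ + ω * s₁ + ω ^ 2 * s₂ - (a + c) * hq - (b * (ω ^ 3 + 2) + c * ω) * hω3
  · linear_combination
      s₀ + ω ^ 2 * s₁ + ω * s₂ - (a + b) * hq - (b * (ω + ω ^ 2) + 2 * c) * hω3

end Blocks

section Pattern

variable {R : Type*} [CommRing R]

def rhoPattern (P E F B B' : R) : Matrix (Fin 9) (Fin 9) R :=
  !![P, 0, 0, 0, -E, 0, 0, 0, -F;
     0, B', 0, -F, 0, 0, 0, 0, 0;
     0, 0, B, 0, 0, 0, -E, 0, 0;
     0, -E, 0, B, 0, 0, 0, 0, 0;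
     -F, 0, 0, 0, P, 0, 0, 0, -E;
     0, 0, 0, 0, 0, B', 0, -F, 0;
     0, 0, -F, 0, 0, 0, B', 0, 0;
     0, 0, 0, 0, 0, -E, 0, B, 0;
     -E, 0, 0, 0, -F, 0, 0, 0, P]

theorem smul_rhoPattern_add_smul_rhoPattern (s t P E F B B' P₁ E₁ F₁ B₁ B₁' : R) :
    s • rhoPattern P E F B B' + t • rhoPattern P₁ E₁ F₁ B₁ B₁' =
      rhoPattern (s * P + t * P₁) (s * E + t * E₁) (s * F + t * F₁) (s * B + t * B₁)
        (s * B' + t * B₁') := by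
  simp only [rhoPattern, smul_of, of_add_of, smul_cons, smul_empty, cons_add_cons,
    empty_add_empty, smul_eq_mul, mul_zero, mul_neg, add_zero, neg_add]

theorem eq_zero_of_rhoPattern_mulVec_eq_zero [IsDomain R] {ω P E F B B' : R} {v : Fin 9 → R}
    (hω : IsPrimitiveRoot ω 3) (hB : B * B' - E * F ≠ 0)
    (hP : ∀ ζ : R, ζ ^ 3 = 1 → P - E * ζ - F * ζ ^ 2 ≠ 0)
    (hv : rhoPattern P E F B B' *ᵥ v = 0) : v = 0 := by
  have row : ∀ i, (rhoPattern P E F B B' *ᵥ v) i = 0 := congrFun hv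
  simp only [mulVec, dotProduct, rhoPattern, of_apply, cons_val', cons_val_fin_one,
    Fin.sum_univ_succ, cons_val_zero, cons_val_succ, Fin.succ_zero_eq_one, Fin.succ_one_eq_two,
    Fin.reduceSucc, Finset.univ_unique, Fin.default_eq_zero, Finset.sum_singleton,
    Fin.forall_fin_succ, zero_mul, neg_mul, zero_add, add_zero, forall_const] at row
  obtain ⟨r₀, r₁, r₂, r₃, r₄, r₅, r₆, r₇, r₈⟩ := row
  have hB₁ : B' * B - (-F) * (-E) ≠ 0 := by rwa [neg_mul_neg, mul_comm B', mul_comm F]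
  have hB₂ : B * B' - (-E) * (-F) ≠ 0 := by rwa [neg_mul_neg]
  obtain ⟨h₁, h₃⟩ := eq_zero_of_two_by_two_det_ne_zero (x := v 1) (y := v 3) hB₁
    (by linear_combination r₁) (by linear_combination r₃)
  obtain ⟨h₂, h₆⟩ := eq_zero_of_two_by_two_det_ne_zero (x := v 2) (y := v 6) hB₂
    (by linear_combination r₂) (by linear_combination r₆)
  obtain ⟨h₅, h₇⟩ := eq_zero_of_two_by_two_det_ne_zero (x := v 5) (y := v 7) hB₁
    (by linear_combination r₅) (by linear_combination r₇)
  obtain ⟨h₀, h₄, h₈⟩ :=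
    eq_zero_of_circulant_eigenvalue_ne_zero (a := v 0) (b := v 4) (c := v 8) hω hP
      (by linear_combination r₀) (by linear_combination r₄) (by linear_combination r₈)
  ext i
  fin_cases i <;> assumption

end Pattern

theorem Matrix.rank_eq_card_of_mulVec_eq_zero {n K : Type*} [Fintype n] [DecidableEq n]
    [Field K] {M : Matrix n n K} (hM : ∀ v, M *ᵥ v = 0 → v = 0) :
    M.rank = Fintype.card n := by
  rw [Matrix.rank, LinearMap.finrank_range_of_inj
    (LinearMap.ker_eq_bot.mp (Matrix.ker_mulVecLin_eq_bot_iff.mpr hM)),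
    Module.finrank_fintype_fun_eq_card]

open scoped Real

-- `θ ∈ arcs i` means `θ + arcShift i ∈ (-π/3, π/3)`; there `2 cos (θ + arcShift i)` is the
-- largest of the three cosines in `pTheta θ`.
noncomputable def arcShift : Fin 3 → ℝ := ![2 * π / 3, 0, -(2 * π / 3)]

theorem arcShift_zero : arcShift 0 = 2 * π / 3 := rfl
theorem arcShift_one : arcShift 1 = 0 := rfl
theorem arcShift_two : arcShift 2 = -(2 * π / 3) := rfl

theorem abs_add_arcShift_lt {θ : ℝ} {i : Fin 3} (hθ : θ ∈ arcs i) :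
    |θ + arcShift i| < π / 3 := by
  rw [abs_lt]
  match i, hθ with
  | 0, ⟨h₁, h₂⟩ => rw [arcShift_zero]; constructor <;> linarith
  | 1, ⟨h₁, h₂⟩ => rw [arcShift_one]; constructor <;> linarith
  | 2, ⟨h₁, h₂⟩ => rw [arcShift_two]; constructor <;> linarith

theorem cos_add_two_pi_div_three_lt {x : ℝ} (hx : |x| < π / 3) :
    Real.cos (x + 2 * π / 3) < Real.cos x := by
  obtain ⟨hx₁, hx₂⟩ := abs_lt.mp hx
  rw [← Real.cos_abs x, ← Real.cos_abs (x + 2 * π / 3), abs_of_pos (by linarith)]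
  exact Real.cos_lt_cos_of_nonneg_of_le_pi (abs_nonneg x) (by linarith) (by linarith)

theorem cos_sub_two_pi_div_three_lt {x : ℝ} (hx : |x| < π / 3) :
    Real.cos (x - 2 * π / 3) < Real.cos x := by
  rw [← Real.cos_neg, ← Real.cos_neg x, neg_sub, sub_eq_neg_add]
  exact cos_add_two_pi_div_three_lt (by rwa [abs_neg])

theorem cos_add_arcShift_lt {θ : ℝ} {i j : Fin 3} (hθ : θ ∈ arcs i) (hij : i ≠ j) :
    Real.cos (θ + arcShift j) < Real.cos (θ + arcShift i) := by
  have hadd := cos_add_two_pi_div_three_lt (abs_add_arcShift_lt hθ)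
  have hsub := cos_sub_two_pi_div_three_lt (abs_add_arcShift_lt hθ)
  match i, j, hij with
  | 0, 0, h | 1, 1, h | 2, 2, h => exact absurd rfl h
  | 0, 1, _ => convert hsub using 2; rw [arcShift_zero, arcShift_one]; ring
  | 0, 2, _ =>
    rw [← Real.cos_add_two_pi]; convert hadd using 2; rw [arcShift_zero, arcShift_two]; ring
  | 1, 0, _ => convert hadd using 2; rw [arcShift_zero, arcShift_one]; ring
  | 1, 2, _ => convert hsub using 2; rw [arcShift_one, arcShift_two]; ring
  | 2, 0, _ =>
    rw [← Real.cos_sub_two_pi]; convert hsub using 2; rw [arcShift_zero, arcShift_two]; ring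
  | 2, 1, _ => convert hadd using 2; rw [arcShift_one, arcShift_two]; ring

theorem two_cos_add_arcShift_le_pTheta (θ : ℝ) (i : Fin 3) :
    2 * Real.cos (θ + arcShift i) ≤ pTheta θ :=
  match i with
  | 0 => by rw [arcShift_zero]; exact le_max_right _ _
  | 1 => by rw [arcShift_one, add_zero]; exact (le_max_right _ _).trans (le_max_left _ _)
  | 2 => by rw [arcShift_two, ← sub_eq_add_neg]; exact (le_max_left _ _).trans (le_max_left _ _)

theorem two_cos_add_arcShift_lt_pTheta {θ : ℝ} {i j : Fin 3} (hθ : θ ∈ arcs i)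
    (hij : i ≠ j) :
    2 * Real.cos (θ + arcShift j) < pTheta θ := by
  linarith [cos_add_arcShift_lt hθ hij, two_cos_add_arcShift_le_pTheta θ i]

theorem ne_of_mem_arcs {θ τ : ℝ} {i j : Fin 3} (hθ : θ ∈ arcs i) (hτ : τ ∈ arcs j)
    (hij : i ≠ j) : θ ≠ τ := by
  rintro rfl
  exact (cos_add_arcShift_lt hθ hij).not_gt (cos_add_arcShift_lt hτ hij.symm)

theorem arcs_subset (i : Fin 3) : arcs i ⊆ Set.Ioo (-π) π := by
  have := Real.pi_pos
  intro θ hθ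
  match i, hθ with
  | 0, ⟨h₁, h₂⟩ | 1, ⟨h₁, h₂⟩ | 2, ⟨h₁, h₂⟩ =>
    exact ⟨by linarith, by linarith⟩

theorem two_cos_sub_lt_div_add_div {b c θ τ : ℝ} (hb : 0 < b) (hc : 0 < c) (hne : θ ≠ τ)
    (hθ : θ ∈ Set.Ioo (-π) π) (hτ : τ ∈ Set.Ioo (-π) π) :
    2 * Real.cos (θ - τ) < b / c + c / b := by
  have hcos : Real.cos (θ - τ) < 1 := by
    refine (Real.cos_le_one _).lt_of_ne fun h => hne (sub_eq_zero.mp ?_)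
    exact (Real.cos_eq_one_iff_of_lt_of_lt (by linarith [hθ.1, hτ.2])
      (by linarith [hθ.2, hτ.1])).mp h
  have hbc : 2 ≤ b / c + c / b := by
    rw [div_add_div _ _ hc.ne' hb.ne', le_div_iff₀ (mul_pos hc hb)]
    nlinarith [sq_nonneg (b - c)]
  linarith

theorem exp_mul_I_mul_add_exp_neg_mul_I_mul (x y : ℝ) :
    exp (x * I) * exp (y * I) + exp (-x * I) * exp (-y * I) =
      ((2 * Real.cos (x + y) : ℝ) : ℂ) := by
  rw [← exp_add, ← exp_add]
  push_cast
  rw [two_cos]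
  ring_nf

theorem exp_mul_I_mul_exp_neg_mul_I (x : ℝ) : exp (x * I) * exp (-x * I) = 1 := by
  rw [← exp_add, neg_mul, add_neg_cancel, exp_zero]

theorem exists_arcShift_of_pow_three_eq_one {ζ : ℂ} (hζ : ζ ^ 3 = 1) :
    ∃ k, ζ = exp (arcShift k * I) := by
  obtain ⟨n, hn, rfl⟩ := (isPrimitiveRoot_exp 3 (by norm_num)).eq_pow_of_pow_eq_one hζ
  rw [← exp_nat_mul]
  interval_cases n
  · exact ⟨1, by rw [arcShift_one]; simp⟩
  · exact ⟨0, by rw [arcShift_zero]; congr 1; push_cast; ring⟩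
  · refine ⟨2, exp_eq_exp_iff_exists_int.mpr ⟨1, ?_⟩⟩
    rw [arcShift_two]; push_cast; ring

theorem sq_eq_exp_neg_of_pow_three_eq_one {s : ℝ} (h : exp (s * I) ^ 3 = 1) :
    exp (s * I) ^ 2 = exp (-s * I) := by
  linear_combination (-exp (s * I) ^ 2) * exp_mul_I_mul_exp_neg_mul_I s + exp (-s * I) * h

section Mixture

variable (l m : ℝ) {b c θ τ : ℝ}

theorem mixture_eigenvalue (s : ℝ) :
    ((l : ℂ) * pTheta θ + (m : ℂ) * pTheta τ)
      - ((l : ℂ) * exp (θ * I) + (m : ℂ) * exp (τ * I)) * exp (s * I)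
      - ((l : ℂ) * exp (-θ * I) + (m : ℂ) * exp (-τ * I)) * exp (-s * I) =
      ((l * (pTheta θ - 2 * Real.cos (θ + s)) + m * (pTheta τ - 2 * Real.cos (τ + s)) : ℝ) :
        ℂ) := by
  have hθ := exp_mul_I_mul_add_exp_neg_mul_I_mul θ s
  have hτ := exp_mul_I_mul_add_exp_neg_mul_I_mul τ s
  push_cast at hθ hτ ⊢
  linear_combination (-(l : ℂ)) * hθ - (m : ℂ) * hτ

theorem mixture_det (hb : b ≠ 0) (hc : c ≠ 0) :
    ((l : ℂ) * b + (m : ℂ) * c) * ((l : ℂ) * (1 / b) + (m : ℂ) * (1 / c))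
      - ((l : ℂ) * exp (θ * I) + (m : ℂ) * exp (τ * I))
        * ((l : ℂ) * exp (-θ * I) + (m : ℂ) * exp (-τ * I)) =
      ((l * m * (b / c + c / b - 2 * Real.cos (θ - τ)) : ℝ) : ℂ) := by
  have hθτ := exp_mul_I_mul_add_exp_neg_mul_I_mul θ (-τ)
  have hb' : (b : ℂ) * (1 / b) = 1 := mul_one_div_cancel (ofReal_ne_zero.mpr hb)
  have hc' : (c : ℂ) * (1 / c) = 1 := mul_one_div_cancel (ofReal_ne_zero.mpr hc)
  rw [← sub_eq_add_neg] at hθτ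
  push_cast at hθτ ⊢
  rw [neg_neg] at hθτ
  linear_combination (l : ℂ) ^ 2 * hb' + (m : ℂ) ^ 2 * hc' - (l : ℂ) * m * hθτ
    - (l : ℂ) ^ 2 * exp_mul_I_mul_exp_neg_mul_I θ
    - (m : ℂ) ^ 2 * exp_mul_I_mul_exp_neg_mul_I τ

end Mixture

theorem rho_eq_rhoPattern (b θ : ℝ) :
    rho b θ = rhoPattern (pTheta θ : ℂ) (exp (θ * I)) (exp (-θ * I)) b (1 / b) := rfl

theorem smul_rho_add_smul_rho (l m b c θ τ : ℝ) :
    (l : ℂ) • rho b θ + (m : ℂ) • rho c τ =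
      rhoPattern ((l : ℂ) * pTheta θ + (m : ℂ) * pTheta τ)
        ((l : ℂ) * exp (θ * I) + (m : ℂ) * exp (τ * I))
        ((l : ℂ) * exp (-θ * I) + (m : ℂ) * exp (-τ * I))
        ((l : ℂ) * b + (m : ℂ) * c) ((l : ℂ) * (1 / b) + (m : ℂ) * (1 / c)) := by
  rw [rho_eq_rhoPattern, rho_eq_rhoPattern, smul_rhoPattern_add_smul_rhoPattern]

theorem eq_zero_of_smul_rho_add_smul_rho_mulVec_eq_zero {b c θ τ l : ℝ} {i j : Fin 3}
    (hb : 0 < b) (hc : 0 < c) (hθ : θ ∈ arcs i) (hτ : τ ∈ arcs j) (hij : i ≠ j)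
    (hl₀ : 0 < l) (hl₁ : l < 1) {v : Fin 9 → ℂ}
    (hv : ((l : ℂ) • rho b θ + ((1 - l : ℝ) : ℂ) • rho c τ) *ᵥ v = 0) : v = 0 := by
  have hm : 0 < 1 - l := sub_pos.mpr hl₁
  rw [smul_rho_add_smul_rho] at hv
  refine eq_zero_of_rhoPattern_mulVec_eq_zero (isPrimitiveRoot_exp 3 (by norm_num)) ?_ ?_ hv
  · have hcos := two_cos_sub_lt_div_add_div hb hc (ne_of_mem_arcs hθ hτ hij)
      (arcs_subset i hθ) (arcs_subset j hτ)
    rw [mixture_det _ _ hb.ne' hc.ne']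
    exact ofReal_ne_zero.mpr (mul_pos (mul_pos hl₀ hm) (sub_pos.mpr hcos)).ne'
  · intro ζ hζ
    obtain ⟨k, rfl⟩ := exists_arcShift_of_pow_three_eq_one hζ
    rw [sq_eq_exp_neg_of_pow_three_eq_one hζ, mixture_eigenvalue]
    refine ofReal_ne_zero.mpr (ne_of_gt ?_)
    have hθk := sub_nonneg.mpr (two_cos_add_arcShift_le_pTheta θ k)
    have hτk := sub_nonneg.mpr (two_cos_add_arcShift_le_pTheta τ k)
    rcases eq_or_ne i k with rfl | hik
    · have hτk' := sub_pos.mpr (two_cos_add_arcShift_lt_pTheta hτ hij.symm)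
      exact add_pos_of_nonneg_of_pos (mul_nonneg hl₀.le hθk) (mul_pos hm hτk')
    · have hθk' := sub_pos.mpr (two_cos_add_arcShift_lt_pTheta hθ hik)
      exact add_pos_of_pos_of_nonneg (mul_pos hl₀ hθk') (mul_nonneg hm.le hτk)

theorem stmt11 (b c θ τ : ℝ) (hb : 0 < b) (hc : 0 < c)
    (h : ∃ i j : Fin 3, i ≠ j ∧ θ ∈ arcs i ∧ τ ∈ arcs j) :
    (∀ v : Fin 9 → ℂ, (rho b θ).mulVec v = 0 → (rho c τ).mulVec v = 0 → v = 0) ∧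
    ∀ l : ℝ, 0 < l → l < 1 →
      ((l : ℂ) • rho b θ + ((1 - l : ℝ) : ℂ) • rho c τ).rank = 9 := by
  obtain ⟨i, j, hij, hθ, hτ⟩ := h
  have hker := fun l hl₀ hl₁ v ↦
    eq_zero_of_smul_rho_add_smul_rho_mulVec_eq_zero (l := l) (v := v) hb hc hθ hτ hij hl₀ hl₁
  refine ⟨fun v hvθ hvτ ↦ hker (1 / 2) (by norm_num) (by norm_num) v ?_,
    fun l hl₀ hl₁ ↦ Matrix.rank_eq_card_of_mulVec_eq_zero (hker l hl₀ hl₁)⟩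
  rw [add_mulVec, smul_mulVec, smul_mulVec, hvθ, hvτ, smul_zero, smul_zero, add_zero]
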